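/- Let (𝔤, ⟨·,·⟩) be a 2-step nilpotent metric Lie algebra admitting a strict conformal Killing-Yano tensor T with associated vector ξ. Then the center z(𝔤) of 𝔤 is 1-dimensional and spanned by ξ (so 𝔤 is isomorphic to a Heisenberg Lie algebra 𝔥_{2n+1}), T vanishes on z(𝔤), and there exists λ ≠ 0 such that on 𝔳 = z(𝔤)^⊥ one has T ∘ j(ξ) = λ·id_𝔳, where j(ξ) : 𝔳 → 𝔳 is the skew-symmetric endomorphism defined by ⟨j(ξ)x, y⟩ = ⟨ξ, [x, y]⟩ for x, y ∈ 𝔳. -/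

import Mathlib

section Defs

variable {g : Type*} [LieRing g] [LieAlgebra ℝ g]

/-- `B` is a (positive definite) inner product on the real Lie algebra `g`,
given as a bilinear form. -/
structure IsInnerProduct (B : g →ₗ[ℝ] g →ₗ[ℝ] ℝ) : Prop where
  symm : ∀ x y : g, B x y = B y x
  posdef : ∀ x : g, x ≠ 0 → 0 < B x x

/-- The Koszul formula characterizing the Levi-Civita connection of the metric Lie
algebra `(g, B)`: `2⟨∇ₓy, z⟩ = ⟨[x,y], z⟩ − ⟨[y,z], x⟩ + ⟨[z,x], y⟩`. -/
def IsLeviCivita (B : g →ₗ[ℝ] g →ₗ[ℝ] ℝ) (D : g → g → g) : Prop :=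
  ∀ x y z : g, 2 * B (D x y) z = B ⁅x, y⁆ z - B ⁅y, z⁆ x + B ⁅z, x⁆ y

/-- A skew-symmetric endomorphism with respect to `B`. -/
def IsSkewSymmetric (B : g →ₗ[ℝ] g →ₗ[ℝ] ℝ) (T : g →ₗ[ℝ] g) : Prop :=
  ∀ x y : g, B (T x) y = - B x (T y)

/-- The conformal Killing-Yano equation for an endomorphism `T` with associated 1-form `θ`:
`⟨(∇ₓT)y, z⟩ + ⟨(∇_yT)x, z⟩ = 2⟨x,y⟩θ(z) − ⟨y,z⟩θ(x) − ⟨x,z⟩θ(y)`,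
where `(∇ₓT)y = ∇ₓ(Ty) − T(∇ₓy)`. -/
def IsCKYWith (B : g →ₗ[ℝ] g →ₗ[ℝ] ℝ) (D : g → g → g) (T : g →ₗ[ℝ] g)
    (θ : g →ₗ[ℝ] ℝ) : Prop :=
  ∀ x y z : g,
    B (D x (T y) - T (D x y)) z + B (D y (T x) - T (D y x)) z =
      2 * B x y * θ z - B y z * θ x - B x z * θ y

/-- A Killing-Yano tensor is a CKY tensor with `θ = 0`. -/
def IsKY (B : g →ₗ[ℝ] g →ₗ[ℝ] ℝ) (D : g → g → g) (T : g →ₗ[ℝ] g) : Prop :=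
  IsCKYWith B D T 0

/-- A parallel tensor: `(∇ₓT)y = 0` for all `x, y`. -/
def IsParallelT (D : g → g → g) (T : g →ₗ[ℝ] g) : Prop :=
  ∀ x y : g, D x (T y) - T (D x y) = 0

/-- The orthogonal complement of a submodule with respect to the bilinear form `B`. -/
def orthComp (B : g →ₗ[ℝ] g →ₗ[ℝ] ℝ) (p : Submodule ℝ g) : Submodule ℝ g where
  carrier := {x : g | ∀ y ∈ p, B x y = 0}
  add_mem' := by
    intro a b ha hb y hy
    simp only [map_add, LinearMap.add_apply, ha y hy, hb y hy, add_zero]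
  zero_mem' := by
    intro y hy
    simp
  smul_mem' := by
    intro c a ha y hy
    simp only [map_smul, LinearMap.smul_apply, ha y hy, smul_eq_mul, mul_zero]

end Defs

/-!
Expanding both covariant derivatives in the CKY equation by the Koszul formula turns it into an
identity between brackets, inner products and `θ`. Since all brackets
are central, evaluating it on elements of `z(𝔤)` and `𝔳` leaves only a few terms. If `θ(v) ≠ 0`
for some `v ∈ 𝔳`, these force `⟨z, [v, ·]⟩ = 0` for every central `z`, so `v` would be central;
hence `θ` vanishes on `𝔳` and `ξ` is central. On the centre the identity reads
`|x|² θ(z) = ⟨x, z⟩ θ(x)`, which for `x ⊥ ξ` gives `x = 0`, so `z(𝔤) = ℝξ`. Then `Tξ` is central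
and orthogonal to `ξ`, so `T` kills the centre. Finally, for `x, y ∈ 𝔳` the identity evaluated
at `(ξ, x, y)` and `(ξ, y, x)` is a pair of linear equations in `⟨T j(ξ) x, y⟩` and
`⟨T j(ξ) y, x⟩`, whose solution is `⟨T j(ξ) x, y⟩ = -2|ξ|² ⟨x, y⟩`.
-/

section

variable {g : Type*} [LieRing g] [LieAlgebra ℝ g] {B : g →ₗ[ℝ] g →ₗ[ℝ] ℝ}

local notation "𝔳" => orthComp B (LieSubmodule.toSubmodule (LieAlgebra.center ℝ g))

namespace IsInnerProduct

theorem eq_zero_of_self_eq_zero (hB : IsInnerProduct B) {x : g} (hx : B x x = 0) : x = 0 := by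
  by_contra h
  exact (hB.posdef x h).ne' hx

theorem nondegenerate (hB : IsInnerProduct B) : LinearMap.BilinForm.Nondegenerate B :=
  ⟨fun x hx => hB.eq_zero_of_self_eq_zero (hx x), fun x hx => hB.eq_zero_of_self_eq_zero (hx x)⟩

theorem exists_forall_apply_eq [FiniteDimensional ℝ g] (hB : IsInnerProduct B)
    (f : g →ₗ[ℝ] ℝ) : ∃ w, ∀ y, B w y = f y :=
  ⟨(LinearMap.BilinForm.toDual B hB.nondegenerate).symm f,
    LinearMap.BilinForm.apply_toDual_symm_apply f⟩

theorem exists_add_mem_orthComp [FiniteDimensional ℝ g] (hB : IsInnerProduct B)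
    (p : Submodule ℝ g) (x : g) : ∃ c ∈ p, ∃ v ∈ orthComp B p, x = c + v := by
  have hcompl : IsCompl p (LinearMap.BilinForm.orthogonal B p) := by
    rw [LinearMap.BilinForm.isCompl_orthogonal_iff_disjoint
      (fun x y h => by rw [hB.symm]; exact h), Submodule.disjoint_def]
    exact fun x hx hx' => hB.eq_zero_of_self_eq_zero (hx' x hx)
  have hx : x ∈ p ⊔ LinearMap.BilinForm.orthogonal B p := by rw [hcompl.sup_eq_top]; trivial
  obtain ⟨c, hc, v, hv, rfl⟩ := Submodule.mem_sup.mp hx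
  exact ⟨c, hc, v, fun y hy => by rw [hB.symm]; exact hv y hy, rfl⟩

theorem eq_zero_of_mem_of_mem_orthComp (hB : IsInnerProduct B) {p : Submodule ℝ g} {x : g}
    (hx : x ∈ p) (hx' : x ∈ orthComp B p) : x = 0 :=
  hB.eq_zero_of_self_eq_zero (hx' x hx)

theorem mem_of_forall_mem_orthComp [FiniteDimensional ℝ g] (hB : IsInnerProduct B)
    {p : Submodule ℝ g} {x : g} (h : ∀ v ∈ orthComp B p, B x v = 0) : x ∈ p := by
  obtain ⟨c, hc, v, hv, rfl⟩ := hB.exists_add_mem_orthComp p x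
  have hvv : B v v = 0 := by
    simpa only [map_add, LinearMap.add_apply, hB.symm c v, hv c hc, zero_add] using h v hv
  rwa [hB.eq_zero_of_self_eq_zero hvv, add_zero]

theorem apply_eq_of_forall_mem_orthComp [FiniteDimensional ℝ g] (hB : IsInnerProduct B)
    {p : Submodule ℝ g} {u : g} {f : g →ₗ[ℝ] ℝ} (hu : u ∈ orthComp B p)
    (hf : ∀ c ∈ p, f c = 0) (h : ∀ v ∈ orthComp B p, B u v = f v) (t : g) : B u t = f t := by
  obtain ⟨c, hc, v, hv, rfl⟩ := hB.exists_add_mem_orthComp p t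
  rw [map_add, map_add, hu c hc, hf c hc, h v hv]

end IsInnerProduct

theorem lie_eq_zero_of_mem_center_right {x : g} (hx : x ∈ LieAlgebra.center ℝ g) (y : g) :
    ⁅y, x⁆ = 0 :=
  (LieModule.mem_maxTrivSubmodule ℝ g g x).mp hx y

theorem lie_eq_zero_of_mem_center_left {x : g} (hx : x ∈ LieAlgebra.center ℝ g) (y : g) :
    ⁅x, y⁆ = 0 := by
  rw [← lie_skew, lie_eq_zero_of_mem_center_right hx, neg_zero]

theorem lie_mem_center_of_two_step (h2step : ∀ x y z : g, ⁅x, ⁅y, z⁆⁆ = 0) (x y : g) :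
    ⁅x, y⁆ ∈ LieAlgebra.center ℝ g :=
  (LieModule.mem_maxTrivSubmodule ℝ g g _).mpr fun z => h2step z x y

theorem inner_lie_eq_zero_of_mem_orthComp (hB : IsInnerProduct B)
    (h2step : ∀ x y z : g, ⁅x, ⁅y, z⁆⁆ = 0) {v : g} (hv : v ∈ 𝔳) (x y : g) : B ⁅x, y⁆ v = 0 := by
  rw [hB.symm]
  exact hv _ (lie_mem_center_of_two_step h2step x y)

namespace IsCKYWith

variable {D : g → g → g} {T : g →ₗ[ℝ] g} {θ : g →ₗ[ℝ] ℝ}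

theorem lie_identity (hD : IsLeviCivita B D) (hT : IsSkewSymmetric B T)
    (hCKY : IsCKYWith B D T θ) (x y z : g) :
    B ⁅x, T y⁆ z + B ⁅y, T x⁆ z - B ⁅T y, z⁆ x - B ⁅T x, z⁆ y
        + B ⁅z, x⁆ (T y) + B ⁅z, y⁆ (T x) - 2 * B ⁅y, T z⁆ x - 2 * B ⁅x, T z⁆ y
      = 4 * B x y * θ z - 2 * B y z * θ x - 2 * B x z * θ y := by
  have h := hCKY x y z
  simp only [map_sub, LinearMap.sub_apply] at h
  have skew_left : ∀ a b c : g, B ⁅b, a⁆ c = - B ⁅a, b⁆ c := fun a b c => by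
    rw [← lie_skew a b, map_neg, LinearMap.neg_apply, neg_neg]
  linear_combination 2 * h - hD x (T y) z - hD y (T x) z - hD x y (T z) - hD y x (T z)
    + 2 * hT (D x y) z + 2 * hT (D y x) z - skew_left x y (T z) - skew_left x (T z) y
    - skew_left y (T z) x

theorem inner_self_mul_apply_of_mem_center (hD : IsLeviCivita B D) (hT : IsSkewSymmetric B T)
    (hCKY : IsCKYWith B D T θ) {x z : g} (hx : x ∈ LieAlgebra.center ℝ g)
    (hz : z ∈ LieAlgebra.center ℝ g) : B x x * θ z = B x z * θ x := by
  have h := hCKY.lie_identity hD hT x x z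
  simp only [lie_eq_zero_of_mem_center_left hx, lie_eq_zero_of_mem_center_right hx,
    lie_eq_zero_of_mem_center_right hz, map_zero, LinearMap.zero_apply] at h
  linear_combination (-1 / 4 : ℝ) * h

theorem inner_lie_apply_of_mem_center (hB : IsInnerProduct B) (hD : IsLeviCivita B D)
    (hT : IsSkewSymmetric B T) (hCKY : IsCKYWith B D T θ) {x z : g}
    (hx : x ∈ LieAlgebra.center ℝ g) (hz : z ∈ LieAlgebra.center ℝ g) (y : g) :
    B ⁅y, T x⁆ z = 2 * B x z * θ y - 2 * B y z * θ x := by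
  have h₁ := hCKY.lie_identity hD hT x y z
  have h₂ := hCKY.lie_identity hD hT z y x
  simp only [lie_eq_zero_of_mem_center_left hx, lie_eq_zero_of_mem_center_right hx,
    lie_eq_zero_of_mem_center_left hz, lie_eq_zero_of_mem_center_right hz, map_zero,
    LinearMap.zero_apply] at h₁ h₂
  linear_combination (-1 / 3 : ℝ) * h₁ + (-2 / 3 : ℝ) * h₂ - (8 / 3 : ℝ) * θ x * hB.symm z y
    + (4 / 3 : ℝ) * θ z * hB.symm y x + (4 / 3 : ℝ) * θ y * hB.symm z x

theorem inner_lie_apply_add_of_mem_orthComp (hB : IsInnerProduct B)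
    (h2step : ∀ x y z : g, ⁅x, ⁅y, z⁆⁆ = 0) (hD : IsLeviCivita B D) (hT : IsSkewSymmetric B T)
    (hCKY : IsCKYWith B D T θ) {x y t : g} (hx : x ∈ 𝔳) (hy : y ∈ 𝔳) (ht : t ∈ 𝔳) :
    B ⁅t, x⁆ (T y) + B ⁅t, y⁆ (T x) = 4 * B x y * θ t - 2 * B y t * θ x - 2 * B x t * θ y := by
  have h := hCKY.lie_identity hD hT x y t
  simp only [inner_lie_eq_zero_of_mem_orthComp hB h2step hx,
    inner_lie_eq_zero_of_mem_orthComp hB h2step hy,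
    inner_lie_eq_zero_of_mem_orthComp hB h2step ht] at h
  linear_combination h

theorem inner_lie_sub_of_mem_center_of_mem_orthComp (hB : IsInnerProduct B)
    (h2step : ∀ x y z : g, ⁅x, ⁅y, z⁆⁆ = 0) (hD : IsLeviCivita B D) (hT : IsSkewSymmetric B T)
    (hCKY : IsCKYWith B D T θ) {x y z : g} (hx : x ∈ LieAlgebra.center ℝ g) (hy : y ∈ 𝔳)
    (hz : z ∈ 𝔳) :
    B ⁅z, y⁆ (T x) - B ⁅T y, z⁆ x - 2 * B ⁅y, T z⁆ x = -2 * B y z * θ x := by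
  have h := hCKY.lie_identity hD hT x y z
  simp only [lie_eq_zero_of_mem_center_left hx, lie_eq_zero_of_mem_center_right hx,
    inner_lie_eq_zero_of_mem_orthComp hB h2step hy,
    inner_lie_eq_zero_of_mem_orthComp hB h2step hz, map_zero, LinearMap.zero_apply] at h
  have hxy : B x y = 0 := by rw [hB.symm]; exact hy x hx
  have hxz : B x z = 0 := by rw [hB.symm]; exact hz x hx
  linear_combination h + 4 * θ z * hxy - 2 * θ y * hxz

theorem apply_mul_inner_self_eq_zero (hB : IsInnerProduct B)
    (h2step : ∀ x y z : g, ⁅x, ⁅y, z⁆⁆ = 0) (hD : IsLeviCivita B D) (hT : IsSkewSymmetric B T)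
    (hCKY : IsCKYWith B D T θ) {v z w : g} (hv : v ∈ 𝔳) (hz : z ∈ LieAlgebra.center ℝ g)
    (hw : ∀ y, B w y = B z ⁅v, y⁆) : θ v * B w w = 0 := by
  have hwV : w ∈ 𝔳 := fun c hc => by rw [hw, lie_eq_zero_of_mem_center_right hc, map_zero]
  have hwv : B w v = 0 := by rw [hw, lie_self, map_zero]
  set c := ⁅v, w⁆
  have hc : c ∈ LieAlgebra.center ℝ g := lie_mem_center_of_two_step h2step v w
  have h₆ := hCKY.inner_lie_apply_of_mem_center hB hD hT hc hz v
  have h₁₀ := hCKY.inner_lie_apply_add_of_mem_orthComp hB h2step hD hT hwV hv hwV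
  rw [lie_self, map_zero, LinearMap.zero_apply] at h₁₀
  -- `h₆` and `h₁₀` compute `⟨T w, [v, w]⟩` as `-2 θ(v) |w|²` and as `2 θ(v) |w|²` respectively.
  have hwvc : B ⁅w, v⁆ (T w) = - B (T w) c := by
    rw [← lie_skew, map_neg, LinearMap.neg_apply, hB.symm]
  linear_combination (1 / 4 : ℝ) * (h₁₀ - hwvc + hT w c - hw (T c) - hB.symm z ⁅v, T c⁆ - h₆
    - 2 * θ v * hB.symm c z + 2 * θ v * hw w + 2 * θ w * hwv - 2 * θ w * hB.symm v w
    + 2 * θ c * (hv z hz))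

theorem apply_eq_zero_of_mem_orthComp [FiniteDimensional ℝ g] (hB : IsInnerProduct B)
    (h2step : ∀ x y z : g, ⁅x, ⁅y, z⁆⁆ = 0) (hD : IsLeviCivita B D) (hT : IsSkewSymmetric B T)
    (hCKY : IsCKYWith B D T θ) {v : g} (hv : v ∈ 𝔳) : θ v = 0 := by
  by_contra hθv
  have hperp : ∀ z ∈ LieAlgebra.center ℝ g, ∀ y, B z ⁅v, y⁆ = 0 := by
    intro z hz y
    obtain ⟨w, hw⟩ := hB.exists_forall_apply_eq ((B z).comp (LieAlgebra.ad ℝ g v))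
    replace hw : ∀ y, B w y = B z ⁅v, y⁆ := hw
    have hw0 : w = 0 := hB.eq_zero_of_self_eq_zero <| (mul_eq_zero.mp
      (hCKY.apply_mul_inner_self_eq_zero hB h2step hD hT hv hz hw)).resolve_left hθv
    rw [← hw, hw0, map_zero, LinearMap.zero_apply]
  have hvc : v ∈ LieAlgebra.center ℝ g :=
    (LieModule.mem_maxTrivSubmodule ℝ g g v).mpr fun y => by
      rw [← lie_skew, neg_eq_zero]
      refine hB.eq_zero_of_mem_of_mem_orthComp (lie_mem_center_of_two_step h2step v y) ?_
      exact fun z hz => by rw [hB.symm]; exact hperp z hz y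
  exact hθv (by rw [hB.eq_zero_of_mem_of_mem_orthComp hvc hv, map_zero])

theorem center_eq_span (hB : IsInnerProduct B) (hD : IsLeviCivita B D)
    (hT : IsSkewSymmetric B T) (hCKY : IsCKYWith B D T θ) {ξ : g} (hξ : ∀ x, θ x = B ξ x)
    (hξc : ξ ∈ LieAlgebra.center ℝ g) (hξne : ξ ≠ 0) :
    (LieAlgebra.center ℝ g).toSubmodule = Submodule.span ℝ {ξ} := by
  refine le_antisymm (fun c hc => ?_) ((Submodule.span_singleton_le_iff_mem _ _).mpr hξc)
  have hξξ : B ξ ξ ≠ 0 := (hB.posdef ξ hξne).ne'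
  set a := B ξ c / B ξ ξ
  have hc' : c - a • ξ ∈ LieAlgebra.center ℝ g := sub_mem hc (Submodule.smul_mem _ a hξc)
  have hθc' : θ (c - a • ξ) = 0 := by
    rw [hξ, map_sub, map_smul, smul_eq_mul, div_mul_cancel₀ _ hξξ, sub_self]
  have h := hCKY.inner_self_mul_apply_of_mem_center hD hT hc' hξc
  rw [hθc', mul_zero, hξ] at h
  have hc'0 := hB.eq_zero_of_self_eq_zero ((mul_eq_zero.mp h).resolve_right hξξ)
  exact Submodule.mem_span_singleton.mpr ⟨a, (sub_eq_zero.mp hc'0).symm⟩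

theorem apply_eq_zero_of_mem_center (hB : IsInnerProduct B)
    (h2step : ∀ x y z : g, ⁅x, ⁅y, z⁆⁆ = 0) (hD : IsLeviCivita B D) (hT : IsSkewSymmetric B T)
    (hCKY : IsCKYWith B D T θ) {ξ : g} (hξ : ∀ x, θ x = B ξ x)
    (hZ : (LieAlgebra.center ℝ g).toSubmodule = Submodule.span ℝ {ξ}) {c : g}
    (hc : c ∈ LieAlgebra.center ℝ g) : T c = 0 := by
  have hmem : ∀ x ∈ LieAlgebra.center ℝ g, ∃ a : ℝ, a • ξ = x := fun x hx =>
    Submodule.mem_span_singleton.mp (hZ ▸ hx)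
  have hξc : ξ ∈ LieAlgebra.center ℝ g := by
    rw [← LieSubmodule.mem_toSubmodule, hZ]
    exact Submodule.mem_span_singleton_self ξ
  have hperp : ∀ x ∈ LieAlgebra.center ℝ g, B x ξ = 0 → x = 0 := by
    intro x hx hxξ
    obtain ⟨a, rfl⟩ := hmem x hx
    refine hB.eq_zero_of_self_eq_zero ?_
    rw [map_smul, hxξ, smul_zero]
  have hTξc : T ξ ∈ LieAlgebra.center ℝ g :=
    (LieModule.mem_maxTrivSubmodule ℝ g g _).mpr fun y => by
      refine hperp _ (lie_mem_center_of_two_step h2step y (T ξ)) ?_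
      rw [hCKY.inner_lie_apply_of_mem_center hB hD hT hξc hξc y, hξ, hξ, hB.symm y ξ]
      ring
  have hTξ : T ξ = 0 := hperp _ hTξc (by linarith [hT ξ ξ, hB.symm (T ξ) ξ])
  obtain ⟨a, rfl⟩ := hmem c hc
  rw [map_smul, hTξ, smul_zero]

theorem inner_apply_j (hB : IsInnerProduct B) (h2step : ∀ x y z : g, ⁅x, ⁅y, z⁆⁆ = 0)
    (hD : IsLeviCivita B D) (hT : IsSkewSymmetric B T) (hCKY : IsCKYWith B D T θ) {ξ : g}
    (hξ : ∀ x, θ x = B ξ x) (hξc : ξ ∈ LieAlgebra.center ℝ g) (hTξ : T ξ = 0) {j : g →ₗ[ℝ] g}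
    (hj : ∀ x ∈ 𝔳, ∀ t, B (j x) t = B ξ ⁅x, t⁆) {x y : g} (hx : x ∈ 𝔳) (hy : y ∈ 𝔳) :
    B (T (j x)) y = -2 * B ξ ξ * B x y := by
  have e₁ := hCKY.inner_lie_sub_of_mem_center_of_mem_orthComp hB h2step hD hT hξc hy hx
  have e₂ := hCKY.inner_lie_sub_of_mem_center_of_mem_orthComp hB h2step hD hT hξc hx hy
  simp only [hTξ, map_zero, ← lie_skew (T x), ← lie_skew (T y), map_neg, LinearMap.neg_apply]
    at e₁ e₂
  have hjx : B ⁅x, T y⁆ ξ = - B (T (j x)) y := by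
    rw [hB.symm, ← hj x hx, hT, neg_neg]
  linear_combination (1 / 3 : ℝ) * e₁ + (2 / 3 : ℝ) * e₂ + hjx
    - (2 / 3 : ℝ) * θ ξ * hB.symm y x - 2 * B x y * hξ ξ

theorem apply_j_eq_smul [FiniteDimensional ℝ g] (hB : IsInnerProduct B)
    (h2step : ∀ x y z : g, ⁅x, ⁅y, z⁆⁆ = 0) (hD : IsLeviCivita B D) (hT : IsSkewSymmetric B T)
    (hCKY : IsCKYWith B D T θ) {ξ : g} (hξ : ∀ x, θ x = B ξ x)
    (hξc : ξ ∈ LieAlgebra.center ℝ g) (hTc : ∀ c ∈ LieAlgebra.center ℝ g, T c = 0)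
    {j : g →ₗ[ℝ] g} (hj : ∀ x ∈ 𝔳, ∀ t, B (j x) t = B ξ ⁅x, t⁆) {x : g} (hx : x ∈ 𝔳) :
    T (j x) = (-2 * B ξ ξ) • x := by
  rw [← sub_eq_zero]
  refine hB.eq_zero_of_mem_of_mem_orthComp
    (hB.mem_of_forall_mem_orthComp (p := (LieAlgebra.center ℝ g).toSubmodule) fun y hy => ?_)
    fun c hc => ?_
  · rw [map_sub, LinearMap.sub_apply,
      hCKY.inner_apply_j hB h2step hD hT hξ hξc (hTc ξ hξc) hj hx hy, map_smul, LinearMap.smul_apply, smul_eq_mul, sub_self]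
  · rw [map_sub, LinearMap.sub_apply, hT, hTc c hc, map_zero, map_smul, LinearMap.smul_apply,
      hx c hc, smul_zero, neg_zero, sub_zero]

end IsCKYWith

end

theorem two_step_strict_cky_heisenberg_general {g : Type*} [LieRing g] [LieAlgebra ℝ g]
    [FiniteDimensional ℝ g]
    (B : g →ₗ[ℝ] g →ₗ[ℝ] ℝ) (hB : IsInnerProduct B)
    (h2step : ∀ x y z : g, ⁅x, ⁅y, z⁆⁆ = 0)
    (D : g → g → g) (hD : IsLeviCivita B D)
    (T : g →ₗ[ℝ] g) (hT : IsSkewSymmetric B T)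
    (θ : g →ₗ[ℝ] ℝ) (hCKY : IsCKYWith B D T θ) (hθ : θ ≠ 0)
    (ξ : g) (hξ : ∀ x : g, θ x = B ξ x)
    (j : g →ₗ[ℝ] g)
    (hjv : ∀ x ∈ orthComp B (LieAlgebra.center ℝ g).toSubmodule,
      j x ∈ orthComp B (LieAlgebra.center ℝ g).toSubmodule)
    (hj : ∀ x ∈ orthComp B (LieAlgebra.center ℝ g).toSubmodule,
      ∀ y ∈ orthComp B (LieAlgebra.center ℝ g).toSubmodule, B (j x) y = B ξ ⁅x, y⁆) :
    ξ ≠ 0 ∧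
    (LieAlgebra.center ℝ g).toSubmodule = Submodule.span ℝ {ξ} ∧
    (∀ z ∈ LieAlgebra.center ℝ g, T z = 0) ∧
    (∃ lam : ℝ, lam ≠ 0 ∧
      ∀ x ∈ orthComp B (LieAlgebra.center ℝ g).toSubmodule, T (j x) = lam • x) := by
  have hξne : ξ ≠ 0 := by
    rintro rfl
    exact hθ (LinearMap.ext fun x => by simp [hξ])
  have hξc : ξ ∈ LieAlgebra.center ℝ g := hB.mem_of_forall_mem_orthComp fun v hv => by
    rw [← hξ]
    exact hCKY.apply_eq_zero_of_mem_orthComp hB h2step hD hT hv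
  have hZ := hCKY.center_eq_span hB hD hT hξ hξc hξne
  have hTc : ∀ c ∈ LieAlgebra.center ℝ g, T c = 0 := fun c hc =>
    hCKY.apply_eq_zero_of_mem_center hB h2step hD hT hξ hZ hc
  have hjt : ∀ x ∈ orthComp B (LieAlgebra.center ℝ g).toSubmodule, ∀ t, B (j x) t = B ξ ⁅x, t⁆ :=
    fun x hx => hB.apply_eq_of_forall_mem_orthComp (f := (B ξ).comp (LieAlgebra.ad ℝ g x))
      (hjv x hx) (fun c hc => by simp [lie_eq_zero_of_mem_center_right hc]) (hj x hx)
  refine ⟨hξne, hZ, hTc, -2 * B ξ ξ, ?_, fun x hx => ?_⟩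
  · exact mul_ne_zero (by norm_num) (hB.posdef ξ hξne).ne'
  · exact hCKY.apply_j_eq_smul hB h2step hD hT hξ hξc hTc hjt hx

/-- A 2-step nilpotent metric Lie algebra with a strict CKY tensor `T`
(associated vector `ξ`) has center spanned by `ξ` (so it is a Heisenberg Lie algebra),
`T` vanishes on the center, and on `𝔳 = z(𝔤)^⊥` one has `T ∘ j(ξ) = λ·id` for some
`λ ≠ 0`, where `j(ξ)` is defined by `⟨j(ξ)x, y⟩ = ⟨ξ, [x, y]⟩`. -/
theorem two_step_strict_cky_heisenberg {g : Type*} [LieRing g] [LieAlgebra ℝ g]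
    [FiniteDimensional ℝ g]
    (B : g →ₗ[ℝ] g →ₗ[ℝ] ℝ) (hB : IsInnerProduct B)
    (hnonab : ∃ x y : g, ⁅x, y⁆ ≠ 0)
    (h2step : ∀ x y z : g, ⁅x, ⁅y, z⁆⁆ = 0)
    (D : g → g → g) (hD : IsLeviCivita B D)
    (T : g →ₗ[ℝ] g) (hT : IsSkewSymmetric B T)
    (θ : g →ₗ[ℝ] ℝ) (hCKY : IsCKYWith B D T θ) (hθ : θ ≠ 0)
    (ξ : g) (hξ : ∀ x : g, θ x = B ξ x)
    (j : g →ₗ[ℝ] g)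
    (hjv : ∀ x ∈ orthComp B (LieAlgebra.center ℝ g).toSubmodule,
      j x ∈ orthComp B (LieAlgebra.center ℝ g).toSubmodule)
    (hj : ∀ x ∈ orthComp B (LieAlgebra.center ℝ g).toSubmodule,
      ∀ y ∈ orthComp B (LieAlgebra.center ℝ g).toSubmodule, B (j x) y = B ξ ⁅x, y⁆) :
    ξ ≠ 0 ∧
    (LieAlgebra.center ℝ g).toSubmodule = Submodule.span ℝ {ξ} ∧
    (∀ z ∈ LieAlgebra.center ℝ g, T z = 0) ∧
    (∃ lam : ℝ, lam ≠ 0 ∧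
      ∀ x ∈ orthComp B (LieAlgebra.center ℝ g).toSubmodule, T (j x) = lam • x) :=
  two_step_strict_cky_heisenberg_general B hB h2step D hD T hT θ hCKY hθ ξ hξ j hjv hj
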